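/- Let S be a unital ring, σ an injective endomorphism, and f ∈ S[t;σ] of degree m ≥ 2 with invertible leading coefficient. If the Petit algebra S_f is not associative, then S is contained in the left nucleus and in the middle nucleus of S_f, and the right nucleus of S_f equals {g ∈ S[t;σ] : deg(g) < m and fg ∈ S[t;σ]f}. -/

import Mathlib

open Finset

/-- `g` has degree `< n`: `g = ∑_{i < n} ι(aᵢ) tⁱ`. -/
def DegLT {S R : Type*} [Ring S] [Ring R] (ι : S →+* R) (t : R) (g : R) (n : ℕ) : Prop :=
  ∃ a : ℕ → S, g = ∑ i ∈ range n, ι (a i) * t ^ i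

/-- The multiplication of the Petit algebra `S_f`, relationally: `r = g∘h = g·h mod_r f`. -/
def PetitMulRel {S R : Type*} [Ring S] [Ring R] (ι : S →+* R) (t : R) (f : R) (m : ℕ)
    (g h r : R) : Prop :=
  DegLT ι t r m ∧ ∃ q : R, g * h = q * f + r

section
variable {S R : Type*} [Ring S] [Ring R] (ι : S →+* R) (t : R) (f : R) (m : ℕ)

/-- `x` lies in the left nucleus of `S_f`: `(x∘h)∘k = x∘(h∘k)` for all `h, k ∈ S_f`. -/
def InNucL (x : R) : Prop :=
  DegLT ι t x m ∧ ∀ h k r₁ r₂ r₃ r₄ : R, DegLT ι t h m → DegLT ι t k m →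
    PetitMulRel ι t f m x h r₁ → PetitMulRel ι t f m r₁ k r₂ →
    PetitMulRel ι t f m h k r₃ → PetitMulRel ι t f m x r₃ r₄ → r₂ = r₄

/-- `x` lies in the middle nucleus of `S_f`: `(h∘x)∘k = h∘(x∘k)` for all `h, k ∈ S_f`. -/
def InNucM (x : R) : Prop :=
  DegLT ι t x m ∧ ∀ h k r₁ r₂ r₃ r₄ : R, DegLT ι t h m → DegLT ι t k m →
    PetitMulRel ι t f m h x r₁ → PetitMulRel ι t f m r₁ k r₂ →
    PetitMulRel ι t f m x k r₃ → PetitMulRel ι t f m h r₃ r₄ → r₂ = r₄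

/-- `x` lies in the right nucleus of `S_f`: `(h∘k)∘x = h∘(k∘x)` for all `h, k ∈ S_f`. -/
def InNucR (x : R) : Prop :=
  DegLT ι t x m ∧ ∀ h k r₁ r₂ r₃ r₄ : R, DegLT ι t h m → DegLT ι t k m →
    PetitMulRel ι t f m h k r₁ → PetitMulRel ι t f m r₁ x r₂ →
    PetitMulRel ι t f m k x r₃ → PetitMulRel ι t f m h r₃ r₄ → r₂ = r₄

end

/-! Everything reduces to right division by `f`. Since the leading coefficient of `f` is a unit,
every element of `S[t;σ]` is congruent modulo the left ideal `S[t;σ] f` to a unique remainder of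
degree `< m`, and `g ∘ h` is the remainder of `g h`. A scalar `a ∈ S` multiplies elements of
degree `< m` on either side without reduction, so `(a ∘ h) ∘ k` and `a ∘ (h ∘ k)` are both the
remainder of `a h k`, and likewise in the middle. For the right nucleus, `x` associates on the right
exactly when right multiplication by `x` preserves the ideal, i.e. `f x ∈ S[t;σ] f`; the hard
direction takes `h = t`, `k = tᵐ⁻¹`, for which `t ∘ tᵐ⁻¹ = tᵐ - c f` with `c` the inverse of the
leading coefficient. -/

section SkewPolynomial

variable {S R : Type*} [Ring S] [Ring R] {σ : S →+* S} {ι : S →+* R} {t : R}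

def degLTSubgroup (ι : S →+* R) (t : R) (n : ℕ) : AddSubgroup R where
  carrier := {g | DegLT ι t g n}
  zero_mem' := ⟨0, by simp⟩
  add_mem' := by
    rintro _ _ ⟨a, rfl⟩ ⟨c, rfl⟩
    exact ⟨a + c, by simp [add_mul, sum_add_distrib]⟩
  neg_mem' := by
    rintro _ ⟨a, rfl⟩
    exact ⟨-a, by simp [neg_mul]⟩

variable {g h : R} {n k : ℕ}

namespace DegLT

theorem zero : DegLT ι t 0 n := (degLTSubgroup ι t n).zero_mem

theorem add (hg : DegLT ι t g n) (hh : DegLT ι t h n) : DegLT ι t (g + h) n :=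
  (degLTSubgroup ι t n).add_mem hg hh

theorem sub (hg : DegLT ι t g n) (hh : DegLT ι t h n) : DegLT ι t (g - h) n :=
  (degLTSubgroup ι t n).sub_mem hg hh

theorem neg (hg : DegLT ι t g n) : DegLT ι t (-g) n :=
  (degLTSubgroup ι t n).neg_mem hg

theorem sum {α : Type*} {s : Finset α} {F : α → R} (h : ∀ x ∈ s, DegLT ι t (F x) n) :
    DegLT ι t (∑ x ∈ s, F x) n :=
  (degLTSubgroup ι t n).sum_mem h

theorem eq_zero (hg : DegLT ι t g 0) : g = 0 := by
  obtain ⟨a, rfl⟩ := hg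
  simp

theorem mono (hg : DegLT ι t g n) (hnk : n ≤ k) : DegLT ι t g k := by
  obtain ⟨a, rfl⟩ := hg
  refine ⟨fun i => if i < n then a i else 0, ?_⟩
  have htail : ∑ i ∈ Ico n k, ι (if i < n then a i else 0) * t ^ i = 0 :=
    sum_eq_zero fun i hi => by simp [not_lt.2 (mem_Ico.1 hi).1]
  rw [← sum_range_add_sum_Ico _ hnk, htail, add_zero]
  exact sum_congr rfl fun i hi => by simp [mem_range.1 hi]

end DegLT

theorem degLT_monomial (c : S) {d : ℕ} (hd : d < n) : DegLT ι t (ι c * t ^ d) n :=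
  ⟨Pi.single d c, by simp [Pi.single_apply, apply_ite ι, ite_mul, hd]⟩

theorem degLT_map (a : S) (hn : 0 < n) : DegLT ι t (ι a) n := by
  simpa using degLT_monomial (t := t) a hn

section SkewMul

theorem pow_mul_map (hrel : ∀ a : S, t * ι a = ι (σ a) * t) (n : ℕ) (c : S) :
    t ^ n * ι c = ι ((σ ^ n) c) * t ^ n := by
  induction n generalizing c with
  | zero => simp
  | succ n ih =>
    rw [pow_succ, mul_assoc, hrel, ← mul_assoc, ih, mul_assoc, ← pow_succ, pow_succ σ]
    rfl

theorem monomial_mul_monomial (hrel : ∀ a : S, t * ι a = ι (σ a) * t) (a c : S) (i j : ℕ) :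
    ι a * t ^ i * (ι c * t ^ j) = ι (a * (σ ^ i) c) * t ^ (i + j) := by
  rw [mul_assoc, ← mul_assoc (t ^ i), pow_mul_map hrel, map_mul, pow_add]
  noncomm_ring

theorem DegLT.mul (hrel : ∀ a : S, t * ι a = ι (σ a) * t) (hg : DegLT ι t g n)
    (hh : DegLT ι t h k) : DegLT ι t (g * h) (n + k - 1) := by
  obtain ⟨a, rfl⟩ := hg
  obtain ⟨c, rfl⟩ := hh
  rw [sum_mul_sum]
  refine DegLT.sum fun i hi => DegLT.sum fun j hj => ?_
  rw [monomial_mul_monomial hrel]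
  exact degLT_monomial _ (by simp only [mem_range] at hi hj; omega)

theorem DegLT.map_mul (hh : DegLT ι t h n) (a : S) : DegLT ι t (ι a * h) n := by
  obtain ⟨c, rfl⟩ := hh
  exact ⟨fun i => a * c i, by simp [mul_sum, mul_assoc]⟩

theorem DegLT.mul_map (hrel : ∀ a : S, t * ι a = ι (σ a) * t) (hh : DegLT ι t h n) (a : S) :
    DegLT ι t (h * ι a) n := by
  simpa using hh.mul hrel (k := 1) ⟨fun _ => a, by simp⟩

end SkewMul

theorem exists_degLT (hbasis : ∀ g : R, ∃! a : ℕ →₀ S, g = a.sum fun i c => ι c * t ^ i)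
    (g : R) : ∃ n, DegLT ι t g n := by
  obtain ⟨A, rfl, -⟩ := hbasis g
  refine ⟨A.support.sup id + 1, A, ?_⟩
  exact Finsupp.sum_of_support_subset A
    (fun i hi => mem_range.2 (Nat.lt_succ_of_le (le_sup (f := id) hi))) _ (by simp)

theorem eq_zero_of_monomial_degLT
    (hbasis : ∀ g : R, ∃! a : ℕ →₀ S, g = a.sum fun i c => ι c * t ^ i)
    {c : S} {d : ℕ} (h : DegLT ι t (ι c * t ^ d) d) : c = 0 := by
  classical
  obtain ⟨a, ha⟩ := h
  have hsingle : ι c * t ^ d = (Finsupp.single d c).sum fun i c => ι c * t ^ i := by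
    simp
  have hlow : ι c * t ^ d
      = (∑ i ∈ range d, Finsupp.single i (a i)).sum fun i c => ι c * t ^ i := by
    rw [← Finsupp.sum_finsetSum_index (by simp) (by simp [add_mul]), ha]
    simp
  have := (hbasis _).unique hsingle hlow
  simpa [Finsupp.finsetSum_apply, Finsupp.single_apply] using congrArg (· d) this

theorem mul_add_smodEq (q f r : R) : q * f + r ≡ r [SMOD Ideal.span {f}] :=
  SModEq.sub_mem.2 <| by simpa using Ideal.mul_mem_left _ q (Ideal.mem_span_singleton_self f)

theorem petitMulRel_iff {f : R} {m : ℕ} {g h r : R} :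
    PetitMulRel ι t f m g h r ↔ DegLT ι t r m ∧ g * h ≡ r [SMOD Ideal.span {f}] := by
  refine and_congr_right fun _ => ?_
  rw [SModEq.sub_mem, Ideal.mem_span_singleton']
  refine exists_congr fun q => ?_
  rw [eq_sub_iff_add_eq, eq_comm]

def UniqueRemainders (ι : S →+* R) (t f : R) (m : ℕ) : Prop :=
  ∀ r r' : R, DegLT ι t r m → DegLT ι t r' m → r ≡ r' [SMOD Ideal.span {f}] → r = r'

section Division

variable {f : R} {m : ℕ} {b : ℕ → S}

theorem pow_eq_map_mul_add (hf : f = ∑ i ∈ range m, ι (b i) * t ^ i + ι (b m) * t ^ m)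
    {c : S} (hc : c * b m = 1) : ∃ r, DegLT ι t r m ∧ t ^ m = ι c * f + r := by
  refine ⟨-∑ i ∈ range m, ι (c * b i) * t ^ i,
    (DegLT.sum fun i hi => degLT_monomial _ (mem_range.1 hi)).neg, ?_⟩
  simp [hf, mul_add, mul_sum, ← mul_assoc, ← map_mul, hc]

theorem DegLT.exists_smodEq (hrel : ∀ a : S, t * ι a = ι (σ a) * t)
    (hf : f = ∑ i ∈ range m, ι (b i) * t ^ i + ι (b m) * t ^ m) (hlead : IsUnit (b m))
    (hg : DegLT ι t g n) : ∃ r, DegLT ι t r m ∧ g ≡ r [SMOD Ideal.span {f}] := by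
  obtain ⟨r₀, hr₀, htm⟩ := pow_eq_map_mul_add hf hlead.val_inv_mul
  induction n generalizing g with
  | zero => exact ⟨0, DegLT.zero, by rw [hg.eq_zero]⟩
  | succ n ih =>
    obtain ⟨a, rfl⟩ := hg
    by_cases hnm : n + 1 ≤ m
    · exact ⟨_, DegLT.mono ⟨a, rfl⟩ hnm, SModEq.rfl⟩
    obtain ⟨e, rfl⟩ : ∃ e, n = e + m := ⟨n - m, by omega⟩
    -- the leading term `a tᵉ⁺ᵐ = a tᵉ (c f + r₀)` is congruent to `a tᵉ r₀`, of degree `< e + m`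
    have hlead_term : ι (a (e + m)) * t ^ (e + m) ≡ ι (a (e + m)) * t ^ e * r₀
        [SMOD Ideal.span {f}] := by
      rw [pow_add, ← mul_assoc, htm, mul_add, ← mul_assoc]
      exact mul_add_smodEq _ _ _
    have hlower : DegLT ι t (ι (a (e + m)) * t ^ e * r₀) (e + m) := by
      simpa using (degLT_monomial (a (e + m)) (Nat.lt_succ_self e)).mul hrel hr₀
    obtain ⟨r, hr, hgr⟩ := ih (DegLT.add ⟨a, rfl⟩ hlower)
    refine ⟨r, hr, ?_⟩
    rw [sum_range_succ]
    exact (SModEq.rfl.add hlead_term).trans hgr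

theorem eq_zero_of_degLT_mul (hrel : ∀ a : S, t * ι a = ι (σ a) * t)
    (hbasis : ∀ g : R, ∃! a : ℕ →₀ S, g = a.sum fun i c => ι c * t ^ i)
    (hf : f = ∑ i ∈ range m, ι (b i) * t ^ i + ι (b m) * t ^ m) (hlead : IsUnit (b m))
    {w : R} (hw : DegLT ι t w n) (hwf : DegLT ι t (w * f) m) : w = 0 := by
  have hfdeg : DegLT ι t f (m + 1) := ⟨b, by rw [sum_range_succ, hf]⟩
  induction n generalizing w with
  | zero => exact hw.eq_zero
  | succ n ih =>
    obtain ⟨a, rfl⟩ := hw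
    rw [sum_range_succ] at hwf ⊢
    set w := ∑ i ∈ range n, ι (a i) * t ^ i
    set f₀ := ∑ i ∈ range m, ι (b i) * t ^ i
    have hlow : DegLT ι t (w * f + ι (a n) * t ^ n * f₀) (n + m) :=
      (DegLT.mul hrel ⟨a, rfl⟩ hfdeg).add <|
        (DegLT.mul hrel (degLT_monomial (a n) (Nat.lt_succ_self n)) ⟨b, rfl⟩).mono (by omega)
    have htop : DegLT ι t (ι (a n * (σ ^ n) (b m)) * t ^ (n + m)) (n + m) := by
      have hsplit : ι (a n * (σ ^ n) (b m)) * t ^ (n + m)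
          = (w + ι (a n) * t ^ n) * f - (w * f + ι (a n) * t ^ n * f₀) := by
        rw [← monomial_mul_monomial hrel, hf]
        noncomm_ring
      rw [hsplit]
      exact (hwf.mono (by omega)).sub hlow
    have han : a n = 0 :=
      (hlead.map (σ ^ n)).mul_left_eq_zero.1 (eq_zero_of_monomial_degLT hbasis htop)
    rw [han, map_zero, zero_mul, add_zero] at hwf ⊢
    exact ih ⟨a, rfl⟩ hwf

theorem uniqueRemainders (hrel : ∀ a : S, t * ι a = ι (σ a) * t)
    (hbasis : ∀ g : R, ∃! a : ℕ →₀ S, g = a.sum fun i c => ι c * t ^ i)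
    (hf : f = ∑ i ∈ range m, ι (b i) * t ^ i + ι (b m) * t ^ m) (hlead : IsUnit (b m)) :
    UniqueRemainders ι t f m := by
  intro r r' hr hr' h
  obtain ⟨q, hq⟩ := Ideal.mem_span_singleton'.1 (SModEq.sub_mem.1 h)
  obtain ⟨n, hn⟩ := exists_degLT hbasis q
  have hq0 : q = 0 := eq_zero_of_degLT_mul hrel hbasis hf hlead hn (hq ▸ hr.sub hr')
  rwa [hq0, zero_mul, eq_comm, sub_eq_zero] at hq

end Division

section Nuclei

variable {f : R} {m : ℕ}

theorem inNucL_map (huniq : UniqueRemainders ι t f m)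
    (hm : 0 < m) (a : S) : InNucL ι t f m (ι a) := by
  refine ⟨degLT_map a hm, fun h k r₁ r₂ r₃ r₄ hh _ h₁ h₂ h₃ h₄ => ?_⟩
  rw [petitMulRel_iff] at h₁ h₂ h₃ h₄
  have e₁ : r₁ = ι a * h := huniq _ _ h₁.1 (hh.map_mul a) h₁.2.symm
  refine huniq _ _ h₂.1 h₄.1 ?_
  calc r₂ ≡ r₁ * k [SMOD Ideal.span {f}] := h₂.2.symm
    _ = ι a * (h * k) := by rw [e₁, mul_assoc]
    _ ≡ ι a * r₃ [SMOD Ideal.span {f}] := h₃.2.smul (ι a)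
    _ ≡ r₄ [SMOD Ideal.span {f}] := h₄.2

theorem inNucM_map (hrel : ∀ a : S, t * ι a = ι (σ a) * t)
    (huniq : UniqueRemainders ι t f m)
    (hm : 0 < m) (a : S) : InNucM ι t f m (ι a) := by
  refine ⟨degLT_map a hm, fun h k r₁ r₂ r₃ r₄ hh hk h₁ h₂ h₃ h₄ => ?_⟩
  rw [petitMulRel_iff] at h₁ h₂ h₃ h₄
  have e₁ : r₁ = h * ι a := huniq _ _ h₁.1 (hh.mul_map hrel a) h₁.2.symm
  have e₃ : r₃ = ι a * k := huniq _ _ h₃.1 (hk.map_mul a) h₃.2.symm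
  refine huniq _ _ h₂.1 h₄.1 ?_
  calc r₂ ≡ r₁ * k [SMOD Ideal.span {f}] := h₂.2.symm
    _ = h * r₃ := by rw [e₁, e₃, mul_assoc]
    _ ≡ r₄ [SMOD Ideal.span {f}] := h₄.2

theorem inNucR_of_mul_eq (huniq : UniqueRemainders ι t f m) {x v : R} (hx : DegLT ι t x m)
    (hfx : f * x = v * f) : InNucR ι t f m x := by
  refine ⟨hx, fun h k r₁ r₂ r₃ r₄ _ _ h₁ h₂ h₃ h₄ => ?_⟩
  obtain ⟨-, q, hq⟩ := h₁
  rw [petitMulRel_iff] at h₂ h₃ h₄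
  refine huniq _ _ h₂.1 h₄.1 ?_
  calc r₂ ≡ r₁ * x [SMOD Ideal.span {f}] := h₂.2.symm
    _ = -(q * v) * f + h * (k * x) := by
      rw [eq_sub_of_add_eq' hq.symm, sub_mul, mul_assoc q, hfx]
      noncomm_ring
    _ ≡ h * (k * x) [SMOD Ideal.span {f}] := mul_add_smodEq _ _ _
    _ ≡ h * r₃ [SMOD Ideal.span {f}] := h₃.2.smul h
    _ ≡ r₄ [SMOD Ideal.span {f}] := h₄.2

theorem exists_mul_eq_of_inNucR {b : ℕ → S}
    (hdiv : ∀ g : R, ∃ r, DegLT ι t r m ∧ g ≡ r [SMOD Ideal.span {f}])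
    (hf : f = ∑ i ∈ range m, ι (b i) * t ^ i + ι (b m) * t ^ m) (hlead : IsUnit (b m))
    (hm : 2 ≤ m) {x : R} (hx : InNucR ι t f m x) : ∃ v, f * x = v * f := by
  obtain ⟨r₁, hr₁, htm⟩ := pow_eq_map_mul_add hf hlead.val_inv_mul
  obtain ⟨r₂, h₂⟩ := hdiv (r₁ * x)
  obtain ⟨r₃, h₃⟩ := hdiv (t ^ (m - 1) * x)
  obtain ⟨r₄, h₄⟩ := hdiv (t * r₃)
  have ht : t * t ^ (m - 1) = t ^ m := by rw [← pow_succ']; congr 1; omega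
  -- associativity of `t ∘ tᵐ⁻¹ ∘ x`, where `t ∘ tᵐ⁻¹ = r₁ = tᵐ - c f` and `t · tᵐ⁻¹ · x = tᵐ x`
  have hassoc : r₂ = r₄ := hx.2 t (t ^ (m - 1)) r₁ r₂ r₃ r₄
    (by simpa using degLT_monomial (ι := ι) (t := t) 1 (show 1 < m by omega))
    (by simpa using degLT_monomial (ι := ι) (t := t) 1 (show m - 1 < m by omega))
    (petitMulRel_iff.2 ⟨hr₁, by rw [ht, htm]; exact mul_add_smodEq _ _ _⟩)
    (petitMulRel_iff.2 h₂) (petitMulRel_iff.2 h₃) (petitMulRel_iff.2 h₄)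
  have hcong : t ^ m * x ≡ r₁ * x [SMOD Ideal.span {f}] :=
    calc t ^ m * x = t * (t ^ (m - 1) * x) := by rw [← mul_assoc, ht]
      _ ≡ t * r₃ [SMOD Ideal.span {f}] := h₃.2.smul t
      _ ≡ r₂ [SMOD Ideal.span {f}] := hassoc ▸ h₄.2
      _ ≡ r₁ * x [SMOD Ideal.span {f}] := h₂.2.symm
  have hcfx : ι ↑hlead.unit⁻¹ * (f * x) ∈ Ideal.span {f} := by
    simpa [htm, add_mul, mul_assoc] using SModEq.sub_mem.1 hcong
  have hfx : f * x ∈ Ideal.span {f} := by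
    simpa [← mul_assoc, ← map_mul] using Ideal.mul_mem_left _ (ι (b m)) hcfx
  obtain ⟨v, hv⟩ := Ideal.mem_span_singleton'.1 hfx
  exact ⟨v, hv.symm⟩

end Nuclei

end SkewPolynomial

theorem petit_algebra_nuclei_general {S R : Type*} [Ring S] [Ring R]
    (σ : S →+* S)
    (ι : S →+* R) (t : R)
    (hrel : ∀ a : S, t * ι a = ι (σ a) * t)
    (hbasis : ∀ g : R, ∃! a : ℕ →₀ S, g = a.sum fun i c => ι c * t ^ i)
    (f : R) (m : ℕ) (hm : 2 ≤ m) (b : ℕ → S)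
    (hf : f = ∑ i ∈ range m, ι (b i) * t ^ i + ι (b m) * t ^ m) (hlead : IsUnit (b m)) :
    (∀ a : S, InNucL ι t f m (ι a)) ∧ (∀ a : S, InNucM ι t f m (ι a)) ∧
    (∀ x : R, InNucR ι t f m x ↔ (DegLT ι t x m ∧ ∃ v : R, f * x = v * f)) := by
  have huniq := uniqueRemainders hrel hbasis hf hlead
  have hdiv : ∀ g : R, ∃ r, DegLT ι t r m ∧ g ≡ r [SMOD Ideal.span {f}] := fun g =>
    (exists_degLT hbasis g).elim fun _ hg => hg.exists_smodEq hrel hf hlead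
  refine ⟨inNucL_map huniq (by omega), inNucM_map hrel huniq (by omega), fun x => ⟨?_, ?_⟩⟩
  · exact fun hx => ⟨hx.1, exists_mul_eq_of_inNucR hdiv hf hlead hm hx⟩
  · rintro ⟨hx, v, hfx⟩
    exact inNucR_of_mul_eq huniq hx hfx

/-- Let `S` be a unital ring, `σ` an injective endomorphism, `f ∈ S[t;σ]` of
degree `m ≥ 2` with invertible leading coefficient.  If the Petit algebra `S_f` is not
associative, then `S ⊆ Nuc_l(S_f)`, `S ⊆ Nuc_m(S_f)`, and
`Nuc_r(S_f) = {g ∈ S[t;σ] : deg g < m and f·g ∈ S[t;σ]f}`. -/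
theorem petit_algebra_nuclei {S R : Type*} [Ring S] [Ring R]
    (σ : S →+* S) (hσ : Function.Injective σ)
    (ι : S →+* R) (hι : Function.Injective ι) (t : R)
    (hrel : ∀ a : S, t * ι a = ι (σ a) * t)
    (hbasis : ∀ g : R, ∃! a : ℕ →₀ S, g = a.sum fun i c => ι c * t ^ i)
    (f : R) (m : ℕ) (hm : 2 ≤ m) (b : ℕ → S)
    (hf : f = ∑ i ∈ range m, ι (b i) * t ^ i + ι (b m) * t ^ m) (hlead : IsUnit (b m))
    (hnotassoc : ¬ (∀ g h k r₁ r₂ r₃ r₄ : R, DegLT ι t g m → DegLT ι t h m → DegLT ι t k m →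
        PetitMulRel ι t f m g h r₁ → PetitMulRel ι t f m r₁ k r₂ →
        PetitMulRel ι t f m h k r₃ → PetitMulRel ι t f m g r₃ r₄ → r₂ = r₄)) :
    (∀ a : S, InNucL ι t f m (ι a)) ∧ (∀ a : S, InNucM ι t f m (ι a)) ∧
    (∀ x : R, InNucR ι t f m x ↔ (DegLT ι t x m ∧ ∃ v : R, f * x = v * f)) :=
  petit_algebra_nuclei_general σ ι t hrel hbasis f m hm b hf hlead
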